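/- Let n ≥ 2, m ≥ 3, and let P be an m-th order, n-dimensional stochastic tensor on S = {1,…,n}. If P is ergodic, then P is irreducible; that is, if for all i1,…,i_m ∈ S there exists k ≥ 1 with p^{(k)}_{i1 … i_m} > 0, then for every nonempty proper subset K of S there exist i1 ∈ K and i2,…,i_m ∈ S \ K with p_{i1 i2 … i_m} > 0. -/

import Mathlib

/-!
If every positive entry `p_{i₁ t}` with `i₁ ∈ K` had some tail index in `K`, then no power
`P^k` could have a positive entry `p^{(k)}_{i t}` with `i ∈ K` and the whole tail `t` outside `K`:
in `p^{(k+1)}_{i t} = Σ_j p^{(k)}_{i j t'} p_{j t}` a positive summand with `j ∈ K` is such an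
entry of `P`, and one with `j ∉ K` is such an entry of `P^k`. Ergodicity, applied to `i ∈ K` and
the constant tail at a state outside `K`, yields such an entry of some power.
-/

open Finset

/-- An `m`-th order, `n`-dimensional tensor with `m = r + 2`: the entry
`p_{i₁ i₂ … i_m}` is written `P i₁ t`, where `t = (i₂, …, i_m)` is the tail of
`m - 1 = r + 1` indices. -/
abbrev HOTensor (n r : ℕ) := Fin n → (Fin (r + 1) → Fin n) → ℝ

/-- `P` is a stochastic tensor. -/
def IsStochasticT {n r : ℕ} (P : HOTensor n r) : Prop :=
  (∀ i t, 0 ≤ P i t ∧ P i t ≤ 1) ∧ ∀ t, ∑ i : Fin n, P i t = 1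

/-- The product `A ⊠ B`:
`(A ⊠ B)_{i₁ i₂ … i_m} = Σ_j a_{i₁ j i₂ … i_{m-1}} b_{j i₂ … i_m}`. -/
def tmul {n r : ℕ} (A B : HOTensor n r) : HOTensor n r :=
  fun i t => ∑ j : Fin n, A i (Fin.cons j (Fin.init t)) * B j t

/-- Tensor powers: `tpow P k` is `P^k`, with entries the `k`-step transition
probabilities `p^{(k)}_{i₁ … i_m}`; `P^0` is the identity tensor. -/
def tpow {n r : ℕ} (P : HOTensor n r) : ℕ → HOTensor n r
  | 0 => fun i t => if i = t 0 then 1 else 0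
  | k + 1 => tmul (tpow P k) P

/-- `fpp P k` is the `(k+1)`-step first passage probability tensor `F^{[k+1]}`:
`f^{[1]} = p`, and `f^{[k+1]}_{i₁ i₂ … i_m} = Σ_{j ≠ i₁} f^{[k]}_{i₁ j i₂ … i_{m-1}} p_{j i₂ … i_m}`. -/
def fpp {n r : ℕ} (P : HOTensor n r) : ℕ → HOTensor n r
  | 0 => P
  | k + 1 => fun i t =>
      ∑ j ∈ Finset.univ.filter (fun j => j ≠ i), fpp P k i (Fin.cons j (Fin.init t)) * P j t

/-- The ever-reaching probability `f_{i₁ i₂ … i_m} = Σ_{k=1}^∞ f^{[k]}_{i₁ i₂ … i_m}`. -/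
noncomputable def everReach {n r : ℕ} (P : HOTensor n r) : HOTensor n r :=
  fun i t => ∑' k : ℕ, fpp P k i t

/-- State `j` is reachable from state `i` (`i → j`): for every choice of
`i₃, …, i_m` there is `k ≥ 0` with `p^{(k)}_{j i i₃ … i_m} > 0`. -/
def Reach {n r : ℕ} (P : HOTensor n r) (i j : Fin n) : Prop :=
  ∀ u : Fin r → Fin n, ∃ k : ℕ, 0 < tpow P k j (Fin.cons i u)

/-- States `i` and `j` communicate (`i ↔ j`). -/
def Comm {n r : ℕ} (P : HOTensor n r) (i j : Fin n) : Prop :=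
  Reach P i j ∧ Reach P j i

/-- State `i` is recurrent: `f_{i i i₃ … i_m} = 1` for all `i₃, …, i_m`. -/
def RecurrentState {n r : ℕ} (P : HOTensor n r) (i : Fin n) : Prop :=
  ∀ u : Fin r → Fin n, everReach P i (Fin.cons i u) = 1

/-- State `i` is fully transient: `f_{i i i₃ … i_m} < 1` for all `i₃, …, i_m`. -/
def FullyTransientState {n r : ℕ} (P : HOTensor n r) (i : Fin n) : Prop :=
  ∀ u : Fin r → Fin n, everReach P i (Fin.cons i u) < 1

/-- `P` is ergodic: for all indices there is `k ≥ 1` with `p^{(k)}_{i₁ … i_m} > 0`. -/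
def ErgodicT {n r : ℕ} (P : HOTensor n r) : Prop :=
  ∀ (i : Fin n) (t : Fin (r + 1) → Fin n), ∃ k : ℕ, 1 ≤ k ∧ 0 < tpow P k i t

/-- `P` is regular: some power `P^k`, `k ≥ 1`, has all entries positive. -/
def RegularT {n r : ℕ} (P : HOTensor n r) : Prop :=
  ∃ k : ℕ, 1 ≤ k ∧ ∀ (i : Fin n) (t : Fin (r + 1) → Fin n), 0 < tpow P k i t

/-- The reduced transition matrix `Q` of `P`: rows and columns are indexed by
`(m-1)`-tuples; the entry in row `(i₁, …, i_{m-1})` and column `(j₁, …, j_{m-1})`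
is `p_{i₁ i₂ … i_{m-1} j_{m-1}}` if `j_ℓ = i_{ℓ+1}` for `ℓ = 1, …, m-2`, else `0`. -/
def reducedT {n r : ℕ} (P : HOTensor n r) :
    Matrix (Fin (r + 1) → Fin n) (Fin (r + 1) → Fin n) ℝ :=
  fun u v =>
    if ∀ ℓ : Fin r, v ℓ.castSucc = u ℓ.succ then
      P (u 0) (Fin.snoc (Fin.tail u) (v (Fin.last r)))
    else 0

section Nonneg

variable {n r : ℕ}

theorem tpow_nonneg {P : HOTensor n r} (hP : ∀ i t, 0 ≤ P i t) (k : ℕ) (i : Fin n)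
    (t : Fin (r + 1) → Fin n) : 0 ≤ tpow P k i t := by
  induction k generalizing i t with
  | zero => unfold tpow; split_ifs <;> norm_num
  | succ k ih =>
    simp only [tpow, tmul]
    exact sum_nonneg fun j _ => mul_nonneg (ih _ _) (hP j t)

theorem exists_pos_of_tmul_pos {A B : HOTensor n r} (hA : ∀ i t, 0 ≤ A i t)
    (hB : ∀ i t, 0 ≤ B i t) {i : Fin n} {t : Fin (r + 1) → Fin n} (h : 0 < tmul A B i t) :
    ∃ j, 0 < A i (Fin.cons j (Fin.init t)) ∧ 0 < B j t := by
  obtain ⟨j, -, hj⟩ := exists_ne_zero_of_sum_ne_zero h.ne'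
  obtain ⟨hAj, hBj⟩ := mul_ne_zero_iff.mp hj
  exact ⟨j, (hA _ _).lt_of_ne' hAj, (hB _ _).lt_of_ne' hBj⟩

theorem exists_pos_leaving_of_tpow_pos {P : HOTensor n r} (hP : ∀ i t, 0 ≤ P i t)
    {K : Set (Fin n)} {k : ℕ} {i : Fin n} {t : Fin (r + 1) → Fin n} (hi : i ∈ K)
    (ht : ∀ ℓ, t ℓ ∉ K) (hpos : 0 < tpow P k i t) :
    ∃ i₁ ∈ K, ∃ t' : Fin (r + 1) → Fin n, (∀ ℓ, t' ℓ ∉ K) ∧ 0 < P i₁ t' := by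
  induction k generalizing t with
  | zero =>
    have hit : i = t 0 := by by_contra h; simp [tpow, h] at hpos
    exact absurd (hit ▸ hi) (ht 0)
  | succ k ih =>
    obtain ⟨j, hkj, hj⟩ := exists_pos_of_tmul_pos (tpow_nonneg hP k) hP hpos
    by_cases hjK : j ∈ K
    · exact ⟨j, hjK, t, ht, hj⟩
    · exact ih (Fin.cases hjK fun ℓ => ht ℓ.castSucc) hkj

end Nonneg

theorem ergodic_implies_irreducible_general (n r : ℕ)
    (P : HOTensor n r) (hP : IsStochasticT P) (herg : ErgodicT P) :
    ∀ K : Set (Fin n), K.Nonempty → K ≠ Set.univ →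
      ∃ i₁ ∈ K, ∃ t : Fin (r + 1) → Fin n, (∀ ℓ, t ℓ ∉ K) ∧ 0 < P i₁ t := by
  rintro K ⟨i, hi⟩ hK
  obtain ⟨a, ha⟩ := (Set.ne_univ_iff_exists_notMem K).mp hK
  obtain ⟨k, -, hpos⟩ := herg i fun _ => a
  exact exists_pos_leaving_of_tpow_pos (fun i t => (hP.1 i t).1) hi (fun _ => ha) hpos

/-- an ergodic higher order chain is irreducible: for every nonempty
proper `K ⊊ S` there are `i₁ ∈ K` and `i₂, …, i_m ∈ S \ K` with `p_{i₁ i₂ … i_m} > 0`. -/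
theorem ergodic_implies_irreducible (n r : ℕ) (hn : 2 ≤ n) (hr : 1 ≤ r)
    (P : HOTensor n r) (hP : IsStochasticT P) (herg : ErgodicT P) :
    ∀ K : Set (Fin n), K.Nonempty → K ≠ Set.univ →
      ∃ i₁ ∈ K, ∃ t : Fin (r + 1) → Fin n, (∀ ℓ, t ℓ ∉ K) ∧ 0 < P i₁ t :=
  ergodic_implies_irreducible_general n r P hP herg
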